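/- Let X ∈ ℝ^{h×w} with X ≠ 0, p ≥ 1, let k be a multiple of w with s = k/w ≤ h, let B be a natural number with 1 ≤ B ≤ w·h², let d > 1 and δ > 0 be reals, let x_min = min{|X_{ij}|^p : X_{ij} ≠ 0}, and let ε = x_min·δ/(w·h²). Let OPT = min_{Γ ∈ 𝕄_{k,B}} ‖X − X_Γ‖_p^p and assume OPT ≥ x_min. Suppose 0 ≤ λ_r, λ_l are reals with λ_l ≤ λ_r + ε; suppose Ω_r is a support with exactly s entries in every column minimizing ‖X − X_Γ‖_p^p + λ_r·EMD(Γ) over all such supports and EMD(Ω_r) ≥ dB; and suppose Ω_l is a support with exactly s entries in every column minimizing ‖X − X_Γ‖_p^p + λ_l·EMD(Γ) over all such supports and EMD(Ω_l) ≤ B. Then ‖X − X_{Ω_l}‖_p^p ≤ (1 + 1/(d−1) + δ)·OPT. -/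

import Mathlib

/-- The Earth Mover's Distance between two finite sets of naturals of equal
cardinality: the minimum, over bijections `π` from `A` onto `B`, of
`∑ a ∈ A, |a - π a|`. -/
noncomputable def natEMD (A B : Finset ℕ) : ℕ :=
  sInf { d : ℕ | ∃ π : ℕ → ℕ, Set.BijOn π ↑A ↑B ∧
    d = ∑ a ∈ A, ((a : ℤ) - (π a : ℤ)).natAbs }

/-- The support of column `c` of a matrix support `Ω`: the set of rows `r`
with `(r, c) ∈ Ω`. -/
def colSupp {h w : ℕ} (Ω : Finset (Fin h × Fin w)) (c : ℕ) : Finset ℕ :=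
  (Ω.filter (fun q => (q.2 : ℕ) = c)).image (fun q => (q.1 : ℕ))

/-- The support-EMD of a matrix support `Ω` (with exactly `s` entries per
column): the sum of the EMDs of consecutive column supports. -/
noncomputable def suppEMD {h w : ℕ} (Ω : Finset (Fin h × Fin w)) : ℕ :=
  ∑ c ∈ Finset.range (w - 1), natEMD (colSupp Ω c) (colSupp Ω (c + 1))

/-- The Constrained EMD model `𝕄_{k,B}` with column sparsity `s = k/w` and
EMD budget `B`: supports in the `h × w` grid with exactly `s` entries per
column and support-EMD at most `B`. -/
noncomputable def cemdModel (h w s B : ℕ) : Set (Finset (Fin h × Fin w)) :=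
  { Ω | (∀ c < w, (colSupp Ω c).card = s) ∧ suppEMD Ω ≤ B }
/-- The entrywise ℓ_p norm of a matrix (for real `p ≥ 1`). -/
noncomputable def matLpNorm {h w : ℕ} (p : ℝ) (X : Matrix (Fin h) (Fin w) ℝ) : ℝ :=
  (∑ r, ∑ c, |X r c| ^ p) ^ (1 / p)

/-- `X_Ω`: the matrix `X` with all entries outside `Ω` set to zero. -/
def matRestrict {h w : ℕ} (X : Matrix (Fin h) (Fin w) ℝ)
    (Ω : Finset (Fin h × Fin w)) : Matrix (Fin h) (Fin w) ℝ :=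
  Matrix.of fun r c => if (r, c) ∈ Ω then X r c else 0


/-!
The only fact about the CEMD model needed is that it contains a support attaining `OPT`
(it is finite, and non-empty since `s` rows repeated in every column give EMD `0`).
Comparing the penalized objective at `Ω_r` with that optimal support `Γ` gives
`λ_r (d - 1) B ≤ OPT`, because `EMD(Ω_r) ≥ dB` while `EMD(Γ) ≤ B`. Comparing it at `Ω_l`
with `Γ` gives `‖X - X_{Ω_l}‖_p^p ≤ OPT + λ_l B ≤ OPT + λ_r B + ε B`, and
`ε B ≤ δ x_min ≤ δ OPT` since `B ≤ w h²`.
-/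

theorem natEMD_self (A : Finset ℕ) : natEMD A A = 0 :=
  Nat.sInf_eq_zero.mpr <| Or.inl ⟨id, Set.bijOn_id _, by simp⟩

theorem suppEMD_eq_zero_of_colSupp_eq {h w : ℕ} {Ω : Finset (Fin h × Fin w)} {A : Finset ℕ}
    (hΩ : ∀ c < w, colSupp Ω c = A) : suppEMD Ω = 0 :=
  Finset.sum_eq_zero fun c hc => by
    have hc : c + 1 < w := by grind
    rw [hΩ c (by omega), hΩ (c + 1) hc, natEMD_self]

theorem colSupp_filter_fst_lt {h w s : ℕ} (hs : s ≤ h) {c : ℕ} (hc : c < w) :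
    colSupp ((Finset.univ : Finset (Fin h × Fin w)).filter fun q => (q.1 : ℕ) < s) c =
      Finset.range s := by
  ext r
  simp only [colSupp, Finset.mem_image, Finset.mem_filter, Finset.mem_univ, true_and,
    Finset.mem_range]
  constructor
  · rintro ⟨q, ⟨hq, -⟩, rfl⟩
    exact hq
  · intro hr
    exact ⟨(⟨r, hr.trans_le hs⟩, ⟨c, hc⟩), ⟨hr, rfl⟩, rfl⟩

theorem cemdModel_nonempty {h w s : ℕ} (B : ℕ) (hs : s ≤ h) : (cemdModel h w s B).Nonempty := by
  refine ⟨Finset.univ.filter fun q => (q.1 : ℕ) < s, fun c hc => ?_, ?_⟩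
  · rw [colSupp_filter_fst_lt hs hc, Finset.card_range]
  · rw [suppEMD_eq_zero_of_colSupp_eq fun c hc => colSupp_filter_fst_lt hs hc]
    exact B.zero_le

theorem exists_mem_cemdModel_eq_sInf {h w s : ℕ} (B : ℕ) (hs : s ≤ h)
    (f : Finset (Fin h × Fin w) → ℝ) :
    ∃ Γ ∈ cemdModel h w s B, f Γ = sInf (f '' cemdModel h w s B) :=
  ((cemdModel_nonempty B hs).image f).csInf_mem ((Set.toFinite _).image f)

theorem matLpNorm_nonneg {h w : ℕ} (p : ℝ) (X : Matrix (Fin h) (Fin w) ℝ) :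
    0 ≤ matLpNorm p X :=
  Real.rpow_nonneg (Finset.sum_nonneg fun _ _ => Finset.sum_nonneg fun _ _ =>
    Real.rpow_nonneg (abs_nonneg _) _) _

section Penalized

variable {α : Type*} {f E : α → ℝ} {lam B : ℝ} {x y : α}

theorem mul_le_div_sub_one_of_penalized_le {d : ℝ} (hd : 1 < d)
    (hmin : f x + lam * E x ≤ f y + lam * E y) (hfx : 0 ≤ f x) (hlam : 0 ≤ lam)
    (hEx : d * B ≤ E x) (hEy : E y ≤ B) : lam * B ≤ f y / (d - 1) := by
  rw [le_div_iff₀ (by linarith)]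
  nlinarith [mul_le_mul_of_nonneg_left hEx hlam, mul_le_mul_of_nonneg_left hEy hlam]

theorem le_add_mul_of_penalized_le (hmin : f x + lam * E x ≤ f y + lam * E y)
    (hlam : 0 ≤ lam) (hEx : 0 ≤ E x) (hEy : E y ≤ B) : f x ≤ f y + lam * B := by
  nlinarith [mul_nonneg hlam hEx, mul_le_mul_of_nonneg_left hEy hlam]

end Penalized

theorem stmt15_general (h w s B : ℕ) (p : ℝ) (hs : s ≤ h)
    (hB2 : B ≤ w * h ^ 2)
    (d δ : ℝ) (hd : 1 < d) (hδ : 0 < δ)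
    (X : Matrix (Fin h) (Fin w) ℝ)
    (xmin : ℝ) (hxmin : xmin = sInf {v : ℝ | ∃ r c, X r c ≠ 0 ∧ v = |X r c| ^ p})
    (ε : ℝ) (hε : ε = xmin * δ / (w * h ^ 2))
    (OPT : ℝ)
    (hOPT : OPT = sInf ((fun Γ => matLpNorm p (X - matRestrict X Γ) ^ p) ''
      cemdModel h w s B))
    (hOPTmin : xmin ≤ OPT)
    (lamr laml : ℝ) (hlamr : 0 ≤ lamr) (hlaml : 0 ≤ laml)
    (hlam : laml ≤ lamr + ε)
    (Ωr : Finset (Fin h × Fin w))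
    (hminr : ∀ Γ : Finset (Fin h × Fin w), (∀ c < w, (colSupp Γ c).card = s) →
      matLpNorm p (X - matRestrict X Ωr) ^ p + lamr * suppEMD Ωr ≤
        matLpNorm p (X - matRestrict X Γ) ^ p + lamr * suppEMD Γ)
    (hEMDr : d * B ≤ (suppEMD Ωr : ℝ))
    (Ωl : Finset (Fin h × Fin w))
    (hminl : ∀ Γ : Finset (Fin h × Fin w), (∀ c < w, (colSupp Γ c).card = s) →
      matLpNorm p (X - matRestrict X Ωl) ^ p + laml * suppEMD Ωl ≤
        matLpNorm p (X - matRestrict X Γ) ^ p + laml * suppEMD Γ) :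
    matLpNorm p (X - matRestrict X Ωl) ^ p ≤ (1 + 1 / (d - 1) + δ) * OPT := by
  set err : Finset (Fin h × Fin w) → ℝ := fun Γ => matLpNorm p (X - matRestrict X Γ) ^ p
  obtain ⟨Γ, ⟨hcol, hEMD⟩, hΓ⟩ := exists_mem_cemdModel_eq_sInf B hs err
  rw [← hOPT] at hΓ
  have hEMDΓ : (suppEMD Γ : ℝ) ≤ B := by exact_mod_cast hEMD
  have hlamrB : lamr * B ≤ OPT / (d - 1) := hΓ ▸ mul_le_div_sub_one_of_penalized_le
    (f := err) (E := fun Γ => suppEMD Γ) hd (hminr Γ hcol)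
    (Real.rpow_nonneg (matLpNorm_nonneg _ _) _) hlamr hEMDr hEMDΓ
  have hlamlB : err Ωl ≤ OPT + laml * B := hΓ ▸ le_add_mul_of_penalized_le
    (f := err) (E := fun Γ => suppEMD Γ) (hminl Γ hcol) hlaml (Nat.cast_nonneg _) hEMDΓ
  have hxmin_nonneg : 0 ≤ xmin := hxmin ▸ Real.sInf_nonneg fun _ ⟨_, _, _, hv⟩ =>
    hv ▸ Real.rpow_nonneg (abs_nonneg _) _
  have hεB : ε * B ≤ δ * OPT := calc
    ε * B = xmin * δ * (B / (w * h ^ 2)) := by rw [hε]; ring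
    _ ≤ xmin * δ := mul_le_of_le_one_right (by positivity)
      (div_le_one_of_le₀ (by exact_mod_cast hB2) (by positivity))
    _ ≤ δ * OPT := by nlinarith
  calc err Ωl
      ≤ OPT + (lamr + ε) * B := hlamlB.trans (by gcongr)
    _ ≤ OPT + OPT / (d - 1) + δ * OPT := by linarith
    _ = (1 + 1 / (d - 1) + δ) * OPT := by ring

theorem stmt15 (h w s B k : ℕ) (p : ℝ) (hp : 1 ≤ p) (hk : k = s * w) (hs : s ≤ h)
    (hB1 : 1 ≤ B) (hB2 : B ≤ w * h ^ 2)
    (d δ : ℝ) (hd : 1 < d) (hδ : 0 < δ)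
    (X : Matrix (Fin h) (Fin w) ℝ) (hX : X ≠ 0)
    (xmin : ℝ) (hxmin : xmin = sInf {v : ℝ | ∃ r c, X r c ≠ 0 ∧ v = |X r c| ^ p})
    (ε : ℝ) (hε : ε = xmin * δ / (w * h ^ 2))
    (OPT : ℝ)
    (hOPT : OPT = sInf ((fun Γ => matLpNorm p (X - matRestrict X Γ) ^ p) ''
      cemdModel h w s B))
    (hOPTmin : xmin ≤ OPT)
    (lamr laml : ℝ) (hlamr : 0 ≤ lamr) (hlaml : 0 ≤ laml)
    (hlam : laml ≤ lamr + ε)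
    (Ωr : Finset (Fin h × Fin w))
    (hcolr : ∀ c < w, (colSupp Ωr c).card = s)
    (hminr : ∀ Γ : Finset (Fin h × Fin w), (∀ c < w, (colSupp Γ c).card = s) →
      matLpNorm p (X - matRestrict X Ωr) ^ p + lamr * suppEMD Ωr ≤
        matLpNorm p (X - matRestrict X Γ) ^ p + lamr * suppEMD Γ)
    (hEMDr : d * B ≤ (suppEMD Ωr : ℝ))
    (Ωl : Finset (Fin h × Fin w))
    (hcoll : ∀ c < w, (colSupp Ωl c).card = s)
    (hminl : ∀ Γ : Finset (Fin h × Fin w), (∀ c < w, (colSupp Γ c).card = s) →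
      matLpNorm p (X - matRestrict X Ωl) ^ p + laml * suppEMD Ωl ≤
        matLpNorm p (X - matRestrict X Γ) ^ p + laml * suppEMD Γ)
    (hEMDl : suppEMD Ωl ≤ B) :
    matLpNorm p (X - matRestrict X Ωl) ^ p ≤ (1 + 1 / (d - 1) + δ) * OPT :=
  stmt15_general h w s B p hs hB2 d δ hd hδ X xmin hxmin ε hε OPT hOPT hOPTmin lamr laml hlamr hlaml
    hlam Ωr hminr hEMDr Ωl hminl
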